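/- arXiv:0811.4080 — 4 statements merged into one kernel-verified Lean document; each statement's English description precedes it below -/
import Mathlib

section
/- Let X be a metric space, U ⊆ X open, and (U_i) a locally finite open covering of U; define V_n inductively by: W_n = U_n \ (⋃_{i<n} V_i ∪ ⋃_{j>n} U_j) and V_n = {x ∈ U_n : dist(x, W_n) < dist(x, ∂U_n)}. Then each V_n is open, V_n ⊆ U_n, W_n ⊆ V_n, and U = ⋃_{i≤n} V_i ∪ ⋃_{j>n} U_j for every n. -/
open EMetric

/-- The explicit inductive shrinking of a locally finite open covering of `U` in a metric
space: with `Wₙ = Uₙ \ (⋃_{i<n} Vᵢ ∪ ⋃_{j>n} Uⱼ)` and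
`Vₙ = {x ∈ Uₙ : dist(x, Wₙ) < dist(x, ∂Uₙ)}` (distances to the empty set being `+∞`,
hence the use of `infEdist`), each `Vₙ` is open, `Vₙ ⊆ Uₙ`, `Wₙ ⊆ Vₙ`, and
`U = ⋃_{i≤n} Vᵢ ∪ ⋃_{j>n} Uⱼ` for every `n`. -/
theorem stmt1 {X : Type*} [MetricSpace X] (U : Set X) (Ui : ℕ → Set X)
    (hUi : ∀ i, IsOpen (Ui i)) (hcov : U = ⋃ i, Ui i) (hlf : LocallyFinite Ui)
    (V W : ℕ → Set X)
    (hW : ∀ n, W n = Ui n \ ((⋃ i, ⋃ (_ : i < n), V i) ∪ ⋃ j, ⋃ (_ : j > n), Ui j))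
    (hV : ∀ n, V n = {x ∈ Ui n |
      EMetric.infEdist x (W n) < EMetric.infEdist x (frontier (Ui n))}) :
    (∀ n, IsOpen (V n)) ∧ (∀ n, V n ⊆ Ui n) ∧ (∀ n, W n ⊆ V n) ∧
    ∀ n, U = (⋃ i, ⋃ (_ : i ≤ n), V i) ∪ ⋃ j, ⋃ (_ : j > n), Ui j := by
  have hVopen : ∀ n, IsOpen (V n) := by
    intro n
    rw [hV]
    have heq : {x ∈ Ui n | infEdist x (W n) < infEdist x (frontier (Ui n))}
        = Ui n ∩ {x | infEdist x (W n) < infEdist x (frontier (Ui n))} := rfl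
    rw [heq]
    exact (hUi n).inter (isOpen_lt continuous_infEdist continuous_infEdist)
  have hVsub : ∀ n, V n ⊆ Ui n := by
    intro n x hx
    rw [hV] at hx
    exact hx.1
  have hWV : ∀ n, W n ⊆ V n := by
    intro n x hx
    have hxU : x ∈ Ui n := by rw [hW] at hx; exact hx.1
    rw [hV]
    refine ⟨hxU, ?_⟩
    have h0 : infEdist x (W n) = 0 := infEdist_zero_of_mem hx
    have hnf : x ∉ frontier (Ui n) := by
      rw [(hUi n).frontier_eq]
      exact fun h => h.2 hxU
    have hpos : 0 < infEdist x (frontier (Ui n)) := by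
      rw [EMetric.infEdist, infEdist_pos_iff_notMem_closure, isClosed_frontier.closure_eq]
      exact hnf
    rw [h0]
    exact hpos
  have key : ∀ n, Ui n ⊆
      ((⋃ i, ⋃ (_ : i < n), V i) ∪ ⋃ j, ⋃ (_ : j > n), Ui j) ∪ V n := by
    intro n x hx
    by_cases h : x ∈ (⋃ i, ⋃ (_ : i < n), V i) ∪ ⋃ j, ⋃ (_ : j > n), Ui j
    · exact Or.inl h
    · exact Or.inr (hWV n (by rw [hW]; exact ⟨hx, h⟩))
  have hback : ∀ n, ((⋃ i, ⋃ (_ : i ≤ n), V i) ∪ ⋃ j, ⋃ (_ : j > n), Ui j) ⊆ U := by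
    intro n
    rw [hcov]
    rintro x (h | h)
    · obtain ⟨i, _, hxi⟩ := Set.mem_iUnion₂.1 h
      exact Set.mem_iUnion.2 ⟨i, hVsub i hxi⟩
    · obtain ⟨j, _, hxj⟩ := Set.mem_iUnion₂.1 h
      exact Set.mem_iUnion.2 ⟨j, hxj⟩
  refine ⟨hVopen, hVsub, hWV, ?_⟩
  intro n
  induction n with
  | zero =>
    refine Set.Subset.antisymm ?_ (hback 0)
    rw [hcov]
    intro x hx
    obtain ⟨i, hxi⟩ := Set.mem_iUnion.1 hx
    rcases Nat.eq_zero_or_pos i with h0 | hpos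
    · subst h0
      rcases key 0 hxi with h | h
      · rcases h with h | h
        · simp at h
        · exact Or.inr h
      · exact Or.inl (Set.mem_iUnion₂.2 ⟨0, le_refl 0, h⟩)
    · exact Or.inr (Set.mem_iUnion₂.2 ⟨i, hpos, hxi⟩)
  | succ n ih =>
    refine Set.Subset.antisymm ?_ (hback (n + 1))
    rw [ih]
    rintro x (h | h)
    · obtain ⟨i, hi, hxi⟩ := Set.mem_iUnion₂.1 h
      exact Or.inl (Set.mem_iUnion₂.2 ⟨i, hi.trans (Nat.le_succ n), hxi⟩)
    · obtain ⟨j, hj, hxj⟩ := Set.mem_iUnion₂.1 h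
      rcases lt_or_eq_of_le (Nat.succ_le_of_lt hj) with h' | h'
      · exact Or.inr (Set.mem_iUnion₂.2 ⟨j, h', hxj⟩)
      · subst h'
        rcases key (n + 1) hxj with hh | hh
        · rcases hh with hh | hh
          · obtain ⟨i, hi, hxi⟩ := Set.mem_iUnion₂.1 hh
            exact Or.inl (Set.mem_iUnion₂.2 ⟨i, Nat.le_of_lt_succ hi |>.trans (Nat.le_succ n), hxi⟩)
          · exact Or.inr hh
        · exact Or.inl (Set.mem_iUnion₂.2 ⟨n + 1, le_refl _, hh⟩)
end

section
/- Let U ⊆ ℝⁿ be open and let f: U → ℝ be a C^∞ function such that f and 1/f are both defined and have polynomial growth at each boundary point of U (i.e., for each compact K and each derivative, the derivative is bounded on K ∩ U by C·dist(x, K \ U)^{-N} for some C, N > 0, and likewise 1/f(x) ≤ C·dist(x, K \ U)^{-N}). Then 1/f is C^∞ on U and all derivatives of 1/f have polynomial growth at each boundary point. -/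
/-!
Polynomial growth at every point is equivalent to a bound, near each point, by a power of the
weight `1 + dist(x, Uᶜ)⁻¹`: a compact neighbourhood can always be enlarged to contain the points
of `Uᶜ` nearest to a smaller ball. Such bounds are stable under sums and powers, and Faà di
Bruno's formula bounds the `k`-th derivative of `1 / f` by `k!² A^(2k+1)`, where `A` bounds
`1 / |f|` and the first `k` derivatives of `f`.
-/

/-- `g` has polynomial growth at `p` relative to the open set `U ⊆ ℝⁿ`: on some compact
neighborhood `K` of `p`, `|g|` is bounded on `K ∩ U` by `C · dist(x, K \ U)^{-N}`. -/
def HasPolyGrowthAt (n : ℕ) (U : Set (EuclideanSpace ℝ (Fin n)))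
    (g : EuclideanSpace ℝ (Fin n) → ℝ) (p : EuclideanSpace ℝ (Fin n)) : Prop :=
  ∃ K : Set (EuclideanSpace ℝ (Fin n)), IsCompact K ∧ K ∈ nhds p ∧
    ∃ C N : ℝ, 0 < C ∧ 0 < N ∧
      ∀ x ∈ K ∩ U, |g x| ≤ C * Metric.infDist x (K \ U) ^ (-N)

open Asymptotics Filter Metric Set Topology
open scoped Nat

section InvDeriv

variable {𝕜 : Type*} [NontriviallyNormedField 𝕜] {E : Type*} [NormedAddCommGroup E]
  [NormedSpace 𝕜 E]

theorem norm_iteratedFDeriv_inv_le (i : ℕ) (y : 𝕜) :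
    ‖iteratedFDeriv 𝕜 i Inv.inv y‖ ≤ i ! * ‖y‖⁻¹ ^ (i + 1) := by
  rw [norm_iteratedFDeriv_eq_norm_iteratedDeriv, iteratedDeriv_eq_iterate, iter_deriv_inv,
    show (-1 - i : ℤ) = -((i + 1 : ℕ) : ℤ) by push_cast; ring, zpow_neg, zpow_natCast]
  simpa using mul_le_mul_of_nonneg_right (Nat.norm_cast_le (α := 𝕜) i !)
    (by positivity : 0 ≤ ‖y‖⁻¹ ^ (i + 1))

theorem norm_iteratedFDerivWithin_inv_le {f : E → 𝕜} {s : Set E} {x : E} {k : ℕ}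
    (hf : ContDiffOn 𝕜 k f s) (hs : UniqueDiffOn 𝕜 s) (hx : x ∈ s) (hne : ∀ y ∈ s, f y ≠ 0)
    {A : ℝ} (hfx : ‖f x‖⁻¹ ≤ A) (hA : ∀ i ≤ k, ‖iteratedFDerivWithin 𝕜 i f s x‖ ≤ A) :
    ‖iteratedFDerivWithin 𝕜 k (fun y => (f y)⁻¹) s x‖ ≤ k ! ^ 2 * A ^ (2 * k + 1) := by
  have hfx0 : 0 < ‖f x‖ := norm_pos_iff.2 (hne x hx)
  have hA1 : 1 ≤ A := by
    have h0 : ‖f x‖ ≤ A := by simpa using hA 0 (Nat.zero_le k)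
    have : ‖f x‖ * ‖f x‖⁻¹ = 1 := mul_inv_cancel₀ hfx0.ne'
    nlinarith [inv_pos.2 hfx0]
  have hinv : ∀ i ≤ k, ‖iteratedFDerivWithin 𝕜 i Inv.inv {0}ᶜ (f x)‖ ≤ k ! * A ^ (k + 1) := by
    intro i hi
    rw [iteratedFDerivWithin_of_isOpen i isOpen_compl_singleton (hne x hx)]
    calc _ ≤ (i ! : ℝ) * ‖f x‖⁻¹ ^ (i + 1) := norm_iteratedFDeriv_inv_le i (f x)
      _ ≤ k ! * A ^ (i + 1) := by gcongr
      _ ≤ k ! * A ^ (k + 1) := by gcongr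
  have hcomp := norm_iteratedFDerivWithin_comp_le (contDiffOn_inv 𝕜) hf le_rfl
    isOpen_compl_singleton.uniqueDiffOn hs hne hx hinv
    (fun i hi hik => (hA i hik).trans (le_self_pow₀ hA1 (Nat.one_le_iff_ne_zero.1 hi)))
  calc ‖iteratedFDerivWithin 𝕜 k (fun y => (f y)⁻¹) s x‖
      ≤ k ! * (k ! * A ^ (k + 1)) * A ^ k := hcomp
    _ = k ! ^ 2 * A ^ (2 * k + 1) := by ring

theorem isBigO_iteratedFDerivWithin_inv {f : E → 𝕜} {s : Set E} {k : ℕ} {l : Filter E}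
    (hl : ∀ᶠ x in l, x ∈ s) (hf : ContDiffOn 𝕜 k f s) (hs : UniqueDiffOn 𝕜 s)
    (hne : ∀ y ∈ s, f y ≠ 0) :
    (iteratedFDerivWithin 𝕜 k (fun y => (f y)⁻¹) s) =O[l] fun x =>
      (‖(f x)⁻¹‖ + ∑ i ∈ Finset.range (k + 1), ‖iteratedFDerivWithin 𝕜 i f s x‖) ^ (2 * k + 1) := by
  refine IsBigO.of_bound (k ! ^ 2) ?_
  filter_upwards [hl] with x hx
  rw [Real.norm_of_nonneg (by positivity)]
  refine norm_iteratedFDerivWithin_inv_le hf hs hx hne ?_ fun i hi => ?_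
  · rw [← norm_inv]
    exact le_add_of_nonneg_right (by positivity)
  · refine (le_add_of_nonneg_left (norm_nonneg _)).trans' ?_
    exact Finset.single_le_sum (f := fun j => ‖iteratedFDerivWithin 𝕜 j f s x‖)
      (fun j _ => norm_nonneg _) (Finset.mem_range_succ_iff.2 hi)

end InvDeriv

section PolyBounded

variable {α F : Type*} [SeminormedAddCommGroup F] {l : Filter α} {w : α → ℝ}

def IsPolyBounded (l : Filter α) (w : α → ℝ) (g : α → F) : Prop :=
  ∃ N : ℕ, g =O[l] fun x => w x ^ N

theorem isPolyBounded_norm_iff {g : α → F} :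
    IsPolyBounded l w (fun x => ‖g x‖) ↔ IsPolyBounded l w g :=
  exists_congr fun _ => isBigO_norm_left

theorem Asymptotics.IsBigO.trans_isPolyBounded {G : Type*} [SeminormedAddCommGroup G] {g : α → F}
    {h : α → G} (hgh : g =O[l] h) (hh : IsPolyBounded l w h) : IsPolyBounded l w g :=
  let ⟨N, hN⟩ := hh
  ⟨N, hgh.trans hN⟩

theorem IsPolyBounded.pow {g : α → ℝ} (hg : IsPolyBounded l w g) (m : ℕ) :
    IsPolyBounded l w fun x => g x ^ m := by
  obtain ⟨N, hN⟩ := hg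
  exact ⟨N * m, by simpa only [pow_mul] using hN.pow m⟩

theorem isBigO_pow_pow_of_le (hw : ∀ᶠ x in l, 1 ≤ w x) {N M : ℕ} (hNM : N ≤ M) :
    (fun x => w x ^ N) =O[l] fun x => w x ^ M :=
  IsBigO.of_bound 1 <| hw.mono fun x hx => by
    rw [one_mul, Real.norm_of_nonneg (by positivity), Real.norm_of_nonneg (by positivity)]
    exact pow_le_pow_right₀ hx hNM

theorem IsPolyBounded.add (hw : ∀ᶠ x in l, 1 ≤ w x) {g h : α → F} (hg : IsPolyBounded l w g)
    (hh : IsPolyBounded l w h) : IsPolyBounded l w fun x => g x + h x := by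
  obtain ⟨N, hN⟩ := hg
  obtain ⟨M, hM⟩ := hh
  exact ⟨N + M, (hN.trans (isBigO_pow_pow_of_le hw (Nat.le_add_right N M))).add
    (hM.trans (isBigO_pow_pow_of_le hw (Nat.le_add_left M N)))⟩

theorem IsPolyBounded.sum (hw : ∀ᶠ x in l, 1 ≤ w x) {ι : Type*} {s : Finset ι} {g : ι → α → F}
    (hg : ∀ i ∈ s, IsPolyBounded l w (g i)) : IsPolyBounded l w fun x => ∑ i ∈ s, g i x := by
  classical
  induction s using Finset.induction_on with
  | empty => exact ⟨0, by simpa using (isBigO_zero _ l : (fun _ => (0 : F)) =O[l] fun x => w x ^ 0)⟩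
  | insert i s hi ih =>
    simp only [Finset.sum_insert hi]
    exact (hg i (Finset.mem_insert_self i s)).add hw
      (ih fun j hj => hg j (Finset.mem_insert_of_mem hj))

end PolyBounded

theorem IsPolyBounded.iteratedFDerivWithin_inv {𝕜 : Type*} [NontriviallyNormedField 𝕜]
    {E : Type*} [NormedAddCommGroup E] [NormedSpace 𝕜 E] {l : Filter E} {w : E → ℝ}
    (hw : ∀ᶠ x in l, 1 ≤ w x) {f : E → 𝕜} {s : Set E} {k : ℕ}
    (hl : ∀ᶠ x in l, x ∈ s) (hf : ContDiffOn 𝕜 k f s) (hs : UniqueDiffOn 𝕜 s)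
    (hne : ∀ y ∈ s, f y ≠ 0) (hinv : IsPolyBounded l w fun x => (f x)⁻¹)
    (hD : ∀ i ≤ k, IsPolyBounded l w (iteratedFDerivWithin 𝕜 i f s)) :
    IsPolyBounded l w (iteratedFDerivWithin 𝕜 k (fun y => (f y)⁻¹) s) := by
  have hsum : IsPolyBounded l w fun x =>
      ∑ i ∈ Finset.range (k + 1), ‖iteratedFDerivWithin 𝕜 i f s x‖ :=
    .sum hw fun i hi => isPolyBounded_norm_iff.2 (hD i (Finset.mem_range_succ_iff.1 hi))
  exact (isBigO_iteratedFDerivWithin_inv hl hf hs hne).trans_isPolyBounded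
    (((isPolyBounded_norm_iff.2 hinv).add hw hsum).pow _)

section BoundaryWeight

variable {X : Type*} [PseudoMetricSpace X] {U : Set X} {x : X}

-- The `1 +` makes the powers of the weight increase with the exponent.
noncomputable def boundaryWeight (U : Set X) (x : X) : ℝ := 1 + (infDist x Uᶜ)⁻¹

theorem one_le_boundaryWeight : 1 ≤ boundaryWeight U x :=
  le_add_of_nonneg_right (inv_nonneg.2 infDist_nonneg)

theorem boundaryWeight_nonneg : 0 ≤ boundaryWeight U x :=
  zero_le_one.trans one_le_boundaryWeight

theorem rpow_neg_infDist_le_boundaryWeight_pow (hU : IsOpen U) (hx : x ∈ U) {T : Set X}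
    (hT : T ⊆ Uᶜ) {N : ℝ} (hN : 0 < N) : infDist x T ^ (-N) ≤ boundaryWeight U x ^ ⌈N⌉₊ := by
  rcases T.eq_empty_or_nonempty with rfl | hTne
  · rw [infDist_empty, Real.zero_rpow (neg_ne_zero.2 hN.ne')]
    exact pow_nonneg boundaryWeight_nonneg _
  have hd : 0 < infDist x Uᶜ :=
    (hU.isClosed_compl.notMem_iff_infDist_pos (hTne.mono hT)).1 (not_not_intro hx)
  calc infDist x T ^ (-N) ≤ infDist x Uᶜ ^ (-N) :=
        Real.rpow_le_rpow_of_nonpos hd (infDist_le_infDist_of_subset hT hTne) (by linarith)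
    _ = (infDist x Uᶜ)⁻¹ ^ N := by rw [Real.rpow_neg hd.le, Real.inv_rpow hd.le]
    _ ≤ boundaryWeight U x ^ N :=
        Real.rpow_le_rpow (by positivity) (le_add_of_nonneg_left zero_le_one) hN.le
    _ ≤ boundaryWeight U x ^ ⌈N⌉₊ := by
        rw [← Real.rpow_natCast]
        exact Real.rpow_le_rpow_of_exponent_le one_le_boundaryWeight (Nat.le_ceil N)

end BoundaryWeight

variable {n : ℕ} {U : Set (EuclideanSpace ℝ (Fin n))} {g : EuclideanSpace ℝ (Fin n) → ℝ}
  {p : EuclideanSpace ℝ (Fin n)}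

theorem HasPolyGrowthAt.isPolyBounded (hU : IsOpen U) (h : HasPolyGrowthAt n U g p) :
    IsPolyBounded (𝓝[U] p) (boundaryWeight U) g := by
  obtain ⟨K, -, hK, C, N, hC, hN, hb⟩ := h
  refine ⟨⌈N⌉₊, IsBigO.of_bound C ?_⟩
  filter_upwards [inter_mem_nhdsWithin U hK] with x ⟨hxU, hxK⟩
  rw [Real.norm_eq_abs, Real.norm_of_nonneg (pow_nonneg boundaryWeight_nonneg _)]
  exact (hb x ⟨hxK, hxU⟩).trans (mul_le_mul_of_nonneg_left
    (rpow_neg_infDist_le_boundaryWeight_pow hU hxU (fun _ hz => hz.2) hN) hC.le)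

/-- With `U = univ` the set `K \ U` is empty and has junk distance `0`, so the bound
forces `g = 0`. -/
theorem HasPolyGrowthAt.nonempty_compl (h : HasPolyGrowthAt n U g p) (hp : p ∈ U)
    (hg : g p ≠ 0) : Uᶜ.Nonempty := by
  by_contra hU
  rw [not_nonempty_iff_eq_empty, compl_empty_iff] at hU
  subst hU
  obtain ⟨K, -, hK, C, N, -, hN, hb⟩ := h
  have := hb p ⟨mem_of_mem_nhds hK, hp⟩
  rw [sdiff_univ, infDist_empty, Real.zero_rpow (neg_ne_zero.2 hN.ne'), mul_zero] at this
  exact hg (abs_nonpos_iff.1 this)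

theorem IsPolyBounded.hasPolyGrowthAt (hU : IsOpen U) (hUc : Uᶜ.Nonempty)
    (h : IsPolyBounded (𝓝[U] p) (boundaryWeight U) g) : HasPolyGrowthAt n U g p := by
  obtain ⟨q, hq⟩ := hUc
  obtain ⟨N, c, hc, hcN⟩ := h.imp fun _ hN => hN.exists_pos
  obtain ⟨r, hr, hbound⟩ :=
    nhds_basis_closedBall.eventually_iff.1 (eventually_nhdsWithin_iff.1 hcN.bound)
  set L := r + dist p q
  -- `K` contains the points of `Uᶜ` nearest to any point of `closedBall p r`.
  set K := closedBall p r ∪ (Uᶜ ∩ closedBall p (r + L))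
  refine ⟨K, (isCompact_closedBall _ _).union
      ((isCompact_closedBall _ _).inter_left hU.isClosed_compl),
    mem_of_superset (closedBall_mem_nhds p hr) subset_union_left,
    c * (1 + L) ^ (N + 1), ((N + 1 : ℕ) : ℝ), by positivity, by positivity, ?_⟩
  rintro x ⟨hxK, hxU⟩
  have hxp : dist x p ≤ r := hxK.resolve_right fun h => h.1 hxU
  obtain ⟨z, hzU, hdz⟩ := hU.isClosed_compl.exists_infDist_eq_dist ⟨q, hq⟩ x
  have hdL : infDist x Uᶜ ≤ L := by
    calc infDist x Uᶜ ≤ dist x q := infDist_le_dist_of_mem hq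
      _ ≤ dist x p + dist p q := dist_triangle _ _ _
      _ ≤ L := by linarith
  have hzK : z ∈ K \ U := by
    refine ⟨Or.inr ⟨hzU, ?_⟩, hzU⟩
    rw [mem_closedBall, dist_comm]
    linarith [dist_triangle p x z, dist_comm x p]
  have hδ : infDist x (K \ U) = infDist x Uᶜ :=
    le_antisymm (hdz ▸ infDist_le_dist_of_mem hzK)
      (infDist_le_infDist_of_subset (fun _ hy => hy.2) ⟨z, hzK⟩)
  have hd : 0 < infDist x Uᶜ :=
    (hU.isClosed_compl.notMem_iff_infDist_pos ⟨q, hq⟩).1 (not_not_intro hxU)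
  have hw : boundaryWeight U x ≤ (1 + L) * (infDist x (K \ U))⁻¹ := by
    rw [hδ, boundaryWeight, add_mul, one_mul, add_comm]
    gcongr
    exact (le_mul_inv_iff₀ hd).2 (by linarith)
  have hgx : |g x| ≤ c * boundaryWeight U x ^ N := by
    simpa [abs_of_nonneg boundaryWeight_nonneg] using hbound hxp hxU
  calc |g x| ≤ c * boundaryWeight U x ^ (N + 1) :=
        hgx.trans (by gcongr; exacts [one_le_boundaryWeight, N.le_succ])
    _ ≤ c * ((1 + L) * (infDist x (K \ U))⁻¹) ^ (N + 1) := by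
        gcongr
        exact boundaryWeight_nonneg
    _ = c * (1 + L) ^ (N + 1) * infDist x (K \ U) ^ (-((N + 1 : ℕ) : ℝ)) := by
        rw [Real.rpow_neg infDist_nonneg, Real.rpow_natCast, mul_pow, inv_pow, mul_assoc]

/-- If `f` is a `C^∞` function on an open set `U ⊆ ℝⁿ`, nonvanishing on `U`, all of whose
derivatives have polynomial growth at every point, and such that `1/f` also has polynomial
growth at every point, then `1/f` is `C^∞` on `U` and all of its derivatives have
polynomial growth at every point. -/
theorem stmt7 (n : ℕ) (U : Set (EuclideanSpace ℝ (Fin n))) (hU : IsOpen U)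
    (f : EuclideanSpace ℝ (Fin n) → ℝ)
    (hf : ContDiffOn ℝ (⊤ : ℕ∞) f U)
    (hne : ∀ x ∈ U, f x ≠ 0)
    (hgrowth : ∀ (k : ℕ) (p : EuclideanSpace ℝ (Fin n)),
      HasPolyGrowthAt n U (fun x => ‖iteratedFDerivWithin ℝ k f U x‖) p)
    (hinv : ∀ p : EuclideanSpace ℝ (Fin n),
      HasPolyGrowthAt n U (fun x => 1 / f x) p) :
    ContDiffOn ℝ (⊤ : ℕ∞) (fun x => 1 / f x) U ∧
    ∀ (k : ℕ) (p : EuclideanSpace ℝ (Fin n)),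
      HasPolyGrowthAt n U
        (fun x => ‖iteratedFDerivWithin ℝ k (fun y => 1 / f y) U x‖) p := by
  simp only [one_div] at hinv ⊢
  refine ⟨hf.inv hne, fun k p => ?_⟩
  have hUc : Uᶜ.Nonempty := by
    rcases U.eq_empty_or_nonempty with rfl | ⟨x, hx⟩
    · simp
    · exact (hinv x).nonempty_compl hx (inv_ne_zero (hne x hx))
  refine IsPolyBounded.hasPolyGrowthAt hU hUc (isPolyBounded_norm_iff.2 ?_)
  refine .iteratedFDerivWithin_inv (.of_forall fun _ => one_le_boundaryWeight)
    self_mem_nhdsWithin (hf.of_le (by exact_mod_cast le_top)) hU.uniqueDiffOn hne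
    ((hinv p).isPolyBounded hU) fun i _ => ?_
  exact isPolyBounded_norm_iff.1 ((hgrowth i p).isPolyBounded hU)
end

section
/- Let X be a site with a sheaf of rings, and suppose 0 → F' → F → F'' → 0 is a short exact sequence of sheaves of vector spaces over a field on X. If for every open U the map Γ(U; F) → Γ(U; F'') is surjective and F' and F satisfy a 'softness' condition stable under restriction to closed subobjects, and the analogous restricted sequences are exact with surjective global sections, then F'' satisfies the same softness condition. (Abstractly: in an abelian category of sheaves over a field, if F' and F are soft — meaning Γ(U;F) → Γ(U;F_Z) is surjective for all admissible closed Z and open U — and 0 → F' → F → F'' → 0 is exact, then F'' is soft.) -/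
open CategoryTheory Limits

theorem surjective_map_app_of_surjective {C D : Type*} [Category C] [Category D]
    {F G : C ⥤ D} (η : F ⟶ G) (Γ : D ⥤ AddCommGrpCat) {X Y : C} (f : X ⟶ Y)
    (hη : Function.Surjective (Γ.map (η.app X)))
    (hf : Function.Surjective (Γ.map (G.map f))) :
    Function.Surjective (Γ.map (η.app Y)) := by
  have hcomm : Γ.map (η.app Y) ∘ Γ.map (F.map f) = Γ.map (G.map f) ∘ Γ.map (η.app X) := by
    ext x
    simp only [Function.comp_apply, ← ConcreteCategory.comp_apply, ← Γ.map_comp,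
      η.naturality]
  exact Function.Surjective.of_comp (hcomm ▸ hf.comp hη)

theorem stmt9_general {Sh : Type*} [Category Sh] [Abelian Sh] {Op Cl : Type*}
    (Γ : Op → Sh ⥤ AddCommGrpCat)
    (ρ : Cl → Sh ⥤ Sh) [∀ Z, (ρ Z).PreservesZeroMorphisms]
    (η : ∀ Z, 𝟭 Sh ⟶ ρ Z)
    (Soft : Sh → Prop)
    (hSoftDef : ∀ F, Soft F ↔
      ∀ (Z : Cl) (U : Op), Function.Surjective ((Γ U).map ((η Z).app F)))
    (hstable : ∀ (Z : Cl) (F : Sh), Soft F → Soft ((ρ Z).obj F))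
    (S : ShortComplex Sh)
    (hρS : ∀ Z : Cl, (S.map (ρ Z)).ShortExact)
    (hProp : ∀ S' : ShortComplex Sh, S'.ShortExact → Soft S'.X₁ →
      ∀ U : Op, Function.Surjective ((Γ U).map S'.g))
    (h1 : Soft S.X₁) (h2 : Soft S.X₂) :
    Soft S.X₃ := by
  rw [hSoftDef]
  intro Z U
  have hρg : Function.Surjective ((Γ U).map ((ρ Z).map S.g)) :=
    hProp (S.map (ρ Z)) (hρS Z) (hstable Z S.X₁ h1) U
  exact surjective_map_app_of_surjective (η Z) (Γ U) S.g ((hSoftDef S.X₂).mp h2 Z U) hρg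

/-- Abstract softness is inherited by quotients.  `Sh` is an abelian category (of sheaves
of vector spaces over a field on a site), `Γ U` are the section functors indexed by the
opens `U : Op`, `ρ Z` are the exact "restriction to a closed subset" functors
`F ↦ F_Z` indexed by the closeds `Z : Cl`, with canonical morphisms `η Z : F ⟶ F_Z`.
A sheaf `F` is soft when every `Γ(U; F) → Γ(U; F_Z)` is surjective.  Assume:
softness is stable under the restrictions `ρ Z`; the functors `ρ Z` preserve the short
exactness of the given sequence `0 → F' → F → F'' → 0`; and (the key Proposition) for any
short exact sequence with soft first term the induced map on sections over any `U` is
surjective.  If `F'` and `F` are soft, then so is `F''`. -/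
theorem stmt9 {Sh : Type*} [Category Sh] [Abelian Sh] {Op Cl : Type*}
    (Γ : Op → Sh ⥤ AddCommGrpCat)
    (ρ : Cl → Sh ⥤ Sh) [∀ Z, (ρ Z).PreservesZeroMorphisms]
    (η : ∀ Z, 𝟭 Sh ⟶ ρ Z)
    (Soft : Sh → Prop)
    (hSoftDef : ∀ F, Soft F ↔
      ∀ (Z : Cl) (U : Op), Function.Surjective ((Γ U).map ((η Z).app F)))
    (hstable : ∀ (Z : Cl) (F : Sh), Soft F → Soft ((ρ Z).obj F))
    (S : ShortComplex Sh) (hS : S.ShortExact)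
    (hρS : ∀ Z : Cl, (S.map (ρ Z)).ShortExact)
    (hProp : ∀ S' : ShortComplex Sh, S'.ShortExact → Soft S'.X₁ →
      ∀ U : Op, Function.Surjective ((Γ U).map S'.g))
    (h1 : Soft S.X₁) (h2 : Soft S.X₂) :
    Soft S.X₃ :=
  stmt9_general Γ ρ η Soft hSoftDef hstable S hρS hProp h1 h2
end

section
/- Let U ⊆ V ⊆ X be open subsets with closure(U) compact, in a locally compact space X. A sheaf F of vector spaces over a field is 'quasi-injective' if for any such pair the restriction Γ(V; F) → Γ(U; F) is surjective. Then: if 0 → F' → F → F'' → 0 is exact with F' quasi-injective, F is quasi-injective if and only if F'' is quasi-injective, and Γ(V;F) → Γ(V;F'') is surjective for every open V. -/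
/-!
A section `t` of `F''` over `V` lifts to `F` near every point, since `F → F''` is surjective on
stalks, and we may take the local lifts over opens with compact closure. Two lifts differ on
their overlap by a section of `F'`, by exactness. If the overlap has compact closure,
quasi-injectivity of `F'` extends this difference to the second open, so the second lift can be
corrected to agree with the first one and the two glue. Hence a maximal partial lift (Zorn: lifts
along a chain glue) is defined on all of `V`. Once `Γ(V; F) → Γ(V; F'')` is onto, quasi-injectivity
passes from `F` to `F''` directly, and from `F''` to `F` by the same correction argument.
-/

open CategoryTheory TopologicalSpace Opposite

/-- A sheaf `F` of `ℂ`-vector spaces on a locally compact space is quasi-injective if for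
every pair of opens `U ⊆ V` with `closure U` compact, the restriction
`Γ(V; F) → Γ(U; F)` is surjective. -/
def QuasiInjectiveSheaf (X : TopCat) (F : TopCat.Sheaf (ModuleCat ℂ) X) : Prop :=
  ∀ U V : Opens X, ∀ h : U ≤ V, IsCompact (closure (U : Set X)) →
    Function.Surjective (F.1.map (homOfLE h).op)

open TopCat TopCat.Presheaf
open scoped AlgebraicGeometry

universe u

namespace TopCat.Sheaf

section

variable {R : Type u} [Ring R] {X : TopCat.{u}}

lemma restrict_add {G : X.Presheaf (ModuleCat.{u} R)} {U V : Opens X} (h : U ≤ V)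
    (s t : G.obj (op V)) : (s + t) |_ U = s |_ U + t |_ U :=
  map_add _ s t

lemma exists_restrict_eq_of_restrict_inf_eq (G : Sheaf (ModuleCat.{u} R) X) {U₁ U₂ : Opens X}
    (s₁ : G.1.obj (op U₁)) (s₂ : G.1.obj (op U₂)) (h : s₁ |_ (U₁ ⊓ U₂) = s₂ |_ (U₁ ⊓ U₂)) :
    ∃ s : G.1.obj (op (U₁ ⊔ U₂)), s |_ U₁ = s₁ ∧ s |_ U₂ = s₂ := by
  let sf : ∀ i : Fin 2, G.1.obj (op (![U₁, U₂] i))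
    | 0 => s₁
    | 1 => s₂
  have hcomp : IsCompatible G.1 ![U₁, U₂] sf := by
    simp only [IsCompatible, Fin.forall_fin_two]
    refine ⟨⟨rfl, h⟩, ?_, rfl⟩
    have h' := congrArg (restrictOpen · (U₂ ⊓ U₁) (inf_comm U₂ U₁).le) h
    simp only [restrict_restrict] at h'
    exact h'.symm
  obtain ⟨s, hs, -⟩ := existsUnique_gluing' G ![U₁, U₂] (U₁ ⊔ U₂)
    (fun i => homOfLE (by fin_cases i <;> simp))
    (sup_le (le_iSup ![U₁, U₂] 0) (le_iSup ![U₁, U₂] 1)) sf hcomp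
  exact ⟨s, hs 0, hs 1⟩

variable {F' F F'' : Sheaf (ModuleCat.{u} R) X} (φ : F' ⟶ F) (ψ : F ⟶ F'')

lemma app_app_eq_zero_of_stalk_exact
    (hexact : ∀ x : X, Function.Exact ((stalkFunctor (ModuleCat R) x).map φ.1)
      ((stalkFunctor (ModuleCat R) x).map ψ.1))
    {U : Opens X} (σ : F'.1.obj (op U)) : ψ.1.app (op U) (φ.1.app (op U) σ) = 0 := by
  refine section_ext F'' U _ _ fun x hx => ?_
  rw [map_zero, ← stalkFunctor_map_germ_apply, ← stalkFunctor_map_germ_apply]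
  exact (hexact x).apply_apply_eq_zero _

lemma exists_app_eq_of_locally
    (hinj : ∀ x : X, Function.Injective ((stalkFunctor (ModuleCat R) x).map φ.1))
    {U : Opens X} (s : F.1.obj (op U))
    (hloc : ∀ x ∈ U, ∃ (W : Opens X) (_ : x ∈ W) (_ : W ≤ U) (σ : F'.1.obj (op W)),
      φ.1.app (op W) σ = s |_ W) :
    ∃ σ, φ.1.app (op U) σ = s := by
  choose W hxW hWU σ hσ using fun x : U => hloc x x.2
  have hcover : U ≤ iSup W := fun x hx => Opens.mem_iSup.2 ⟨⟨x, hx⟩, hxW _⟩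
  have hφ {V : Opens X} := app_injective_of_stalkFunctor_map_injective φ.1 V fun x _ => hinj x
  have hcomp : IsCompatible F'.1 W σ := fun i j => hφ <| by
    change φ.1.app _ (σ i |_ (W i ⊓ W j)) = φ.1.app _ (σ j |_ (W i ⊓ W j))
    rw [map_restrict, map_restrict, hσ, hσ, restrict_restrict, restrict_restrict]
  obtain ⟨σU, hσU, -⟩ := existsUnique_gluing' F' W U (fun i => homOfLE (hWU i)) hcover σ hcomp
  refine ⟨σU, eq_of_locally_eq' F W U (fun i => homOfLE (hWU i)) hcover _ _ fun i => ?_⟩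
  change restrictOpen (φ.1.app _ σU) (W i) (hWU i) = restrictOpen s (W i) (hWU i)
  rw [← map_restrict, ← hσ i]
  exact congrArg _ (hσU i)

lemma exists_app_eq_of_app_eq_zero
    (hinj : ∀ x : X, Function.Injective ((stalkFunctor (ModuleCat R) x).map φ.1))
    (hexact : ∀ x : X, Function.Exact ((stalkFunctor (ModuleCat R) x).map φ.1)
      ((stalkFunctor (ModuleCat R) x).map ψ.1))
    {U : Opens X} {s : F.1.obj (op U)} (hs : ψ.1.app (op U) s = 0) :
    ∃ σ, φ.1.app (op U) σ = s := by
  refine exists_app_eq_of_locally φ hinj s fun x hx => ?_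
  obtain ⟨e, he⟩ := (hexact x (F.presheaf.germ U x hx s)).1 <| by
    rw [stalkFunctor_map_germ_apply, hs, map_zero]
    rfl
  obtain ⟨W₀, hxW₀, σ₀, rfl⟩ := F'.presheaf.exists_germ_eq e
  rw [stalkFunctor_map_germ_apply] at he
  obtain ⟨W, hxW, iW₀, iU, heq⟩ := F.presheaf.germ_eq x hxW₀ hx _ _ he
  exact ⟨W, hxW, iU.le, restrictOpen σ₀ W iW₀.le, by rw [map_restrict]; exact heq⟩

structure PartialLift {V : Opens X} (t : F''.1.obj (op V)) where
  U : Opens X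
  le : U ≤ V
  s : F.1.obj (op U)
  app_eq : ψ.1.app (op U) s = t |_ U

namespace PartialLift

variable {ψ} {V : Opens X} {t : F''.1.obj (op V)}

instance : Preorder (PartialLift ψ t) where
  le p q := ∃ h : p.U ≤ q.U, q.s |_ p.U = p.s
  le_refl p := ⟨le_rfl, restrict_self _⟩
  le_trans p q r := fun ⟨hpq, e₁⟩ ⟨hqr, e₂⟩ =>
    ⟨hpq.trans hqr, by rw [← restrict_restrict hpq hqr, e₂, e₁]⟩

lemma bddAbove_of_isChain {c : Set (PartialLift ψ t)} (hc : IsChain (· ≤ ·) c) : BddAbove c := by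
  let W : c → Opens X := fun p => p.1.U
  have hcomp : IsCompatible F.1 W (fun p => p.1.s) := by
    intro p q
    change p.1.s |_ (W p ⊓ W q) = q.1.s |_ (W p ⊓ W q)
    rcases hc.total p.2 q.2 with ⟨hpq, e⟩ | ⟨hqp, e⟩
    · rw [← e, restrict_restrict]
    · rw [← e, restrict_restrict]
  obtain ⟨s, hs, -⟩ := existsUnique_gluing F W _ hcomp
  have hWV : iSup W ≤ V := iSup_le fun p => p.1.le
  refine ⟨⟨iSup W, hWV, s, ?_⟩, fun p hp => ⟨le_iSup W ⟨p, hp⟩, hs ⟨p, hp⟩⟩⟩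
  refine eq_of_locally_eq F'' W _ _ fun p => ?_
  change restrictOpen (ψ.1.app _ s) (W p) (le_iSup W p)
    = restrictOpen (t |_ iSup W) (W p) (le_iSup W p)
  rw [← map_restrict, restrict_restrict, ← p.1.app_eq]
  exact congrArg _ (hs p)

lemma exists_le_of_restrict_inf_eq (p q : PartialLift ψ t)
    (h : p.s |_ (p.U ⊓ q.U) = q.s |_ (p.U ⊓ q.U)) : ∃ r : PartialLift ψ t, p ≤ r ∧ q.U ≤ r.U := by
  obtain ⟨s, hp, hq⟩ := exists_restrict_eq_of_restrict_inf_eq F p.s q.s h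
  have hle : p.U ⊔ q.U ≤ V := sup_le p.le q.le
  refine ⟨⟨p.U ⊔ q.U, hle, s, ?_⟩, ⟨le_sup_left, hp⟩, le_sup_right⟩
  refine eq_of_locally_eq₂ F'' (homOfLE le_sup_left) (homOfLE le_sup_right) le_rfl _ _ ?_ ?_
  · change ψ.1.app _ s |_ p.U = t |_ (p.U ⊔ q.U) |_ p.U
    rw [← map_restrict, hp, p.app_eq, restrict_restrict]
  · change ψ.1.app _ s |_ q.U = t |_ (p.U ⊔ q.U) |_ q.U
    rw [← map_restrict, hq, q.app_eq, restrict_restrict]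

lemma exists_mem_isCompact_closure [WeaklyLocallyCompactSpace X] [R1Space X]
    (hsurj : ∀ x : X, Function.Surjective ((stalkFunctor (ModuleCat R) x).map ψ.1))
    {x : X} (hx : x ∈ V) :
    ∃ q : PartialLift ψ t, x ∈ q.U ∧ IsCompact (closure (q.U : Set X)) := by
  obtain ⟨W, hWV, ⟨s, hs⟩, hxW⟩ := (isLocallySurjective_iff ψ.1).1
    ((locally_surjective_iff_surjective_on_stalks ψ.1).2 hsurj) V t x hx
  obtain ⟨O, hO, hxO, hOc⟩ := exists_isOpen_mem_isCompact_closure x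
  let W' : Opens X := W ⊓ ⟨O, hO⟩
  refine ⟨⟨W', inf_le_left.trans hWV, s |_ W', ?_⟩, ⟨hxW, hxO⟩,
    hOc.of_isClosed_subset isClosed_closure (closure_mono inf_le_right)⟩
  rw [map_restrict, hs, restrict_restrict]

end PartialLift

end

section

variable {X : TopCat.{0}} {F' F F'' : Sheaf (ModuleCat.{0} ℂ) X} (φ : F' ⟶ F) (ψ : F ⟶ F'')

lemma PartialLift.exists_le_of_isCompact_closure_inf
    (hinj : ∀ x : X, Function.Injective ((stalkFunctor (ModuleCat ℂ) x).map φ.1))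
    (hexact : ∀ x : X, Function.Exact ((stalkFunctor (ModuleCat ℂ) x).map φ.1)
      ((stalkFunctor (ModuleCat ℂ) x).map ψ.1))
    (hF' : QuasiInjectiveSheaf X F') {V : Opens X} {t : F''.1.obj (op V)}
    (p q : PartialLift ψ t) (hpq : IsCompact (closure ((p.U ⊓ q.U : Opens X) : Set X))) :
    ∃ r : PartialLift ψ t, p ≤ r ∧ q.U ≤ r.U := by
  obtain ⟨σ, hσ⟩ := exists_app_eq_of_app_eq_zero φ ψ hinj hexact
    (s := p.s |_ (p.U ⊓ q.U) - q.s |_ (p.U ⊓ q.U)) <| by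
      rw [map_sub, map_restrict, map_restrict, p.app_eq, q.app_eq, restrict_restrict,
        restrict_restrict, sub_self]
  obtain ⟨τ, hτ : τ |_ (p.U ⊓ q.U) = σ⟩ := hF' _ _ inf_le_right hpq σ
  have hagree : p.s |_ (p.U ⊓ q.U) = (q.s + φ.1.app (op q.U) τ) |_ (p.U ⊓ q.U) := by
    rw [restrict_add, ← map_restrict, hτ, hσ, add_sub_cancel]
  exact p.exists_le_of_restrict_inf_eq ⟨q.U, q.le, q.s + φ.1.app (op q.U) τ, by
    rw [map_add, app_app_eq_zero_of_stalk_exact φ ψ hexact, add_zero, q.app_eq]⟩ hagree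

theorem app_surjective_of_quasiInjectiveSheaf [WeaklyLocallyCompactSpace X] [R1Space X]
    (hinj : ∀ x : X, Function.Injective ((stalkFunctor (ModuleCat ℂ) x).map φ.1))
    (hexact : ∀ x : X, Function.Exact ((stalkFunctor (ModuleCat ℂ) x).map φ.1)
      ((stalkFunctor (ModuleCat ℂ) x).map ψ.1))
    (hsurj : ∀ x : X, Function.Surjective ((stalkFunctor (ModuleCat ℂ) x).map ψ.1))
    (hF' : QuasiInjectiveSheaf X F') (V : Opens X) : Function.Surjective (ψ.1.app (op V)) := by
  intro t
  obtain ⟨m, hm⟩ := zorn_le (α := PartialLift ψ t) fun _ => PartialLift.bddAbove_of_isChain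
  have hV : V ≤ m.U := by
    intro x hx
    obtain ⟨q, hxq, hq⟩ := PartialLift.exists_mem_isCompact_closure hsurj hx (t := t) (ψ := ψ)
    obtain ⟨r, hmr, hqr⟩ := m.exists_le_of_isCompact_closure_inf φ ψ hinj hexact hF' q
      (hq.of_isClosed_subset isClosed_closure (closure_mono inf_le_right))
    obtain ⟨hrm, -⟩ := hm hmr
    exact hrm (hqr hxq)
  refine ⟨restrictOpen m.s V hV, ?_⟩
  rw [map_restrict, m.app_eq, restrict_restrict, restrict_self]

end

end TopCat.Sheaf

namespace QuasiInjectiveSheaf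

variable {X : TopCat.{0}} {F' F F'' : Sheaf (ModuleCat.{0} ℂ) X}

lemma of_app_surjective {ψ : F ⟶ F''} (hψ : ∀ V : Opens X, Function.Surjective (ψ.1.app (op V)))
    (hF : QuasiInjectiveSheaf X F) : QuasiInjectiveSheaf X F'' := by
  intro U V h hU s''
  obtain ⟨s, rfl⟩ := hψ U s''
  obtain ⟨s', rfl⟩ := hF U V h hU s
  exact ⟨ψ.1.app _ s', (map_restrict ψ.1 h s').symm⟩

lemma middle_of_left_of_right (φ : F' ⟶ F) (ψ : F ⟶ F'')
    (hinj : ∀ x : X, Function.Injective ((stalkFunctor (ModuleCat ℂ) x).map φ.1))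
    (hexact : ∀ x : X, Function.Exact ((stalkFunctor (ModuleCat ℂ) x).map φ.1)
      ((stalkFunctor (ModuleCat ℂ) x).map ψ.1))
    (hψ : ∀ V : Opens X, Function.Surjective (ψ.1.app (op V)))
    (hF' : QuasiInjectiveSheaf X F') (hF'' : QuasiInjectiveSheaf X F'') :
    QuasiInjectiveSheaf X F := by
  intro U V h hU s
  obtain ⟨t'', ht'' : t'' |_ U = ψ.1.app _ s⟩ := hF'' U V h hU (ψ.1.app _ s)
  obtain ⟨t, rfl⟩ := hψ V t''
  obtain ⟨σ, hσ⟩ := Sheaf.exists_app_eq_of_app_eq_zero φ ψ hinj hexact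
    (s := s - t |_ U) <| by rw [map_sub, map_restrict, ht'', sub_self]
  obtain ⟨τ, hτ : τ |_ U = σ⟩ := hF' U V h hU σ
  refine ⟨t + φ.1.app _ τ, ?_⟩
  change (t + φ.1.app _ τ) |_ U = s
  rw [Sheaf.restrict_add, ← map_restrict, hτ, hσ, add_sub_cancel]

end QuasiInjectiveSheaf

/-- Let `0 → F' → F → F'' → 0` be a short exact sequence (exactness expressed on stalks)
of sheaves of `ℂ`-vector spaces on a locally compact space, with `F'` quasi-injective.
Then `F` is quasi-injective if and only if `F''` is, and `Γ(V; F) → Γ(V; F'')` is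
surjective for every open `V`. -/
theorem stmt15 (X : TopCat) [LocallyCompactSpace X] [T2Space X]
    (F' F F'' : TopCat.Sheaf (ModuleCat ℂ) X)
    (φ : F' ⟶ F) (ψ : F ⟶ F'')
    (hinj : ∀ x : X, Function.Injective
      ((TopCat.Presheaf.stalkFunctor (ModuleCat ℂ) x).map φ.1))
    (hexact : ∀ x : X, Function.Exact
      ((TopCat.Presheaf.stalkFunctor (ModuleCat ℂ) x).map φ.1)
      ((TopCat.Presheaf.stalkFunctor (ModuleCat ℂ) x).map ψ.1))
    (hsurj : ∀ x : X, Function.Surjective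
      ((TopCat.Presheaf.stalkFunctor (ModuleCat ℂ) x).map ψ.1))
    (hqinj : QuasiInjectiveSheaf X F') :
    (QuasiInjectiveSheaf X F ↔ QuasiInjectiveSheaf X F'') ∧
    ∀ V : Opens X, Function.Surjective (ψ.1.app (op V)) := by
  have hψ : ∀ V : Opens X, Function.Surjective (ψ.1.app (op V)) :=
    TopCat.Sheaf.app_surjective_of_quasiInjectiveSheaf φ ψ hinj hexact hsurj hqinj
  exact ⟨⟨fun hF => hF.of_app_surjective hψ,
    hqinj.middle_of_left_of_right φ ψ hinj hexact hψ⟩, hψ⟩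
end
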